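/- Let $K\ge 1$, $\delta>0$, and let $z:[0,\infty)\to[0,\infty)$ be a function such that $z(0)=|x|$ for some $x$ with $|x|>0$, and such that the 'restart' decay estimate holds: for all $s,t\ge 0$, $z(s+t) \le \frac{K^2 z(s)^2}{K z(s)+\delta t}$. Then $z(t)=0$ for all $t \ge 4K^2|x|/\delta$. -/

import Mathlib

/-!
If `z s ≤ a`, the restart estimate from time `s` gives `z t ≤ K² a² / (δ (t - s)) ≤ a / 2` as soon as
`t - s ≥ 2K² a / δ`. Halving the bound costs a time proportional to the bound itself, so the
waiting times form a geometric series: `z` is at most `x₀ / 2ⁿ⁺¹` after time `L x₀ (2 - 2⁻ⁿ)`, with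
`L = 2K² / δ`, and hence vanishes after time `2 L x₀ = 4K² x₀ / δ`.
-/

section Halving

variable {z : ℝ → ℝ} {L : ℝ}

theorem le_half_of_restart_decay {K δ : ℝ} (hK : 0 < K) (hδ : 0 < δ)
    (hznn : ∀ t, 0 ≤ t → 0 ≤ z t)
    (hdecay : ∀ s t, 0 ≤ s → 0 ≤ t → z (s + t) ≤ K ^ 2 * z s ^ 2 / (K * z s + δ * t))
    {s a t : ℝ} (hs : 0 ≤ s) (ha : 0 < a) (hza : z s ≤ a) (ht : s + 2 * K ^ 2 / δ * a ≤ t) :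
    z t ≤ a / 2 := by
  have hzs : 0 ≤ z s := hznn s hs
  have hwait : 2 * K ^ 2 * a ≤ δ * (t - s) := by
    have hgap : 2 * K ^ 2 / δ * a ≤ t - s := by linarith
    rw [div_mul_eq_mul_div, div_le_iff₀ hδ] at hgap
    linarith
  have hwait_pos : 0 < 2 * K ^ 2 * a := by positivity
  calc z t = z (s + (t - s)) := by rw [add_sub_cancel]
    _ ≤ K ^ 2 * z s ^ 2 / (K * z s + δ * (t - s)) := hdecay s (t - s) hs (by nlinarith)
    _ ≤ K ^ 2 * a ^ 2 / (2 * K ^ 2 * a) := by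
        gcongr
        nlinarith [mul_nonneg hK.le hzs]
    _ = a / 2 := by field_simp

theorem le_div_two_pow_of_halving (hL : 0 ≤ L)
    (halve : ∀ s a t, 0 ≤ s → 0 < a → z s ≤ a → s + L * a ≤ t → z t ≤ a / 2)
    {x₀ : ℝ} (hx₀ : 0 < x₀) (hz₀ : z 0 ≤ x₀) (n : ℕ) :
    ∀ t, L * x₀ * (2 - 1 / 2 ^ n) ≤ t → z t ≤ x₀ / 2 ^ (n + 1) := by
  induction n with
  | zero =>
    intro t ht
    simpa using halve 0 x₀ t le_rfl hx₀ hz₀ (by linarith)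
  | succ n ih =>
    intro t ht
    have hpow : 1 / (2 : ℝ) ^ n ≤ 1 := by
      rw [div_le_one (by positivity)]; exact one_le_pow₀ one_le_two
    have hs : 0 ≤ L * x₀ * (2 - 1 / 2 ^ n) := by
      have := mul_nonneg hL hx₀.le; nlinarith
    have hnext : L * x₀ * (2 - 1 / 2 ^ n) + L * (x₀ / 2 ^ (n + 1)) = L * x₀ * (2 - 1 / 2 ^ (n + 1)) := by
      field_simp; ring
    have := halve _ _ t hs (by positivity) (ih _ le_rfl) (hnext ▸ ht)
    rwa [div_div, ← pow_succ] at this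

theorem eq_zero_of_halving (hL : 0 ≤ L)
    (halve : ∀ s a t, 0 ≤ s → 0 < a → z s ≤ a → s + L * a ≤ t → z t ≤ a / 2)
    (hznn : ∀ t, 0 ≤ t → 0 ≤ z t) {x₀ : ℝ} (hx₀ : 0 < x₀) (hz₀ : z 0 ≤ x₀)
    {t : ℝ} (ht : 2 * L * x₀ ≤ t) : z t = 0 := by
  have hbound (n : ℕ) : z t ≤ x₀ / 2 * (1 / 2) ^ n := by
    have hle : L * x₀ * (2 - 1 / 2 ^ n) ≤ t := by
      have := mul_nonneg hL hx₀.le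
      nlinarith [show 0 < 1 / (2 : ℝ) ^ n by positivity]
    calc z t ≤ x₀ / 2 ^ (n + 1) := le_div_two_pow_of_halving hL halve hx₀ hz₀ n t hle
      _ = x₀ / 2 * (1 / 2) ^ n := by rw [pow_succ, one_div_pow]; field_simp
  have hlim : Filter.Tendsto (fun n : ℕ ↦ x₀ / 2 * (1 / 2 : ℝ) ^ n) Filter.atTop (nhds 0) := by
    simpa using (tendsto_pow_atTop_nhds_zero_of_lt_one (by norm_num : (0 : ℝ) ≤ 1 / 2)
      (by norm_num)).const_mul (x₀ / 2)
  have ht₀ : 0 ≤ t := le_trans (by have := mul_nonneg hL hx₀.le; linarith) ht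
  exact le_antisymm (ge_of_tendsto' hlim hbound) (hznn t ht₀)

end Halving

/-- If a nonnegative function `z` with `z 0 = x0 > 0` satisfies the restart decay
estimate `z (s+t) ≤ K² z(s)² / (K z(s) + δ t)`, then `z` vanishes from time
`4 K² x0 / δ` onward. -/
theorem stmt_2 (K δ x0 : ℝ) (hK : 1 ≤ K) (hδ : 0 < δ) (hx0 : 0 < x0)
    (z : ℝ → ℝ) (hznn : ∀ t, 0 ≤ t → 0 ≤ z t) (hz0 : z 0 = x0)
    (hdecay : ∀ s t, 0 ≤ s → 0 ≤ t →
      z (s + t) ≤ K ^ 2 * (z s) ^ 2 / (K * z s + δ * t)) :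
    ∀ t, 4 * K ^ 2 * x0 / δ ≤ t → z t = 0 := by
  intro t ht
  have hK₀ : 0 < K := one_pos.trans_le hK
  refine eq_zero_of_halving (L := 2 * K ^ 2 / δ) (by positivity)
    (fun s a t hs ha hza hst ↦ le_half_of_restart_decay hK₀ hδ hznn hdecay hs ha hza hst)
    hznn hx0 hz0.le ?_
  calc 2 * (2 * K ^ 2 / δ) * x0 = 4 * K ^ 2 * x0 / δ := by ring
    _ ≤ t := ht
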